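/- arXiv:1601.06211 — 3 statements merged into one kernel-verified Lean document; each statement's English description precedes it below -/
import Mathlib

section
/- With S = ℂ[α_0, α_1, β_0, β_1] bigraded as for F_1 and F = x_0 x_1 y_0 y_1 of degree (3,2), the ideal I = (α_0² − α_1², β_0² − α_1²β_1²) is contained in F^⊥, and the subscheme of F_1 it defines is the reduced union of the four points [1,1;1,1], [1,1;1,−1], [1,−1;1,1], [1,−1;1,−1]. -/
open MvPolynomial

/-- Contraction action: on monomials, `x^a ∘ y^b = y^(b-a)` if `a ≤ b`, else `0`. -/
noncomputable def contract {σ : Type*} (g F : MvPolynomial σ ℂ) : MvPolynomial σ ℂ :=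
  ∑ a ∈ g.support, ∑ b ∈ F.support,
    if a ≤ b then monomial (b - a) (g.coeff a * F.coeff b) else 0

/-!
A polynomial kills the monomial `y^u` under contraction as soon as none of its monomials
divides `x^u`, and these polynomials form an ideal. For `u = (1,1,1,1)` it contains `α₀²`, `α₁²`
and `β₀²`, hence both generators of `I`. On the geometric side, `α₀² = α₁²` and `β₀² = α₁²β₁²`
mean `α₁ = ±α₀` and `β₀ = ±α₀β₁`, which is the parametrisation of the four torus orbits.
-/

namespace MvPolynomial

variable {σ R : Type*} [CommSemiring R]

/-- The monomial ideal generated by the `X i ^ (u i + 1)`, described through coefficients. -/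
def coeffVanishingBelow (u : σ →₀ ℕ) : Ideal (MvPolynomial σ R) where
  carrier := {g | ∀ a ≤ u, g.coeff a = 0}
  zero_mem' _ _ := coeff_zero _
  add_mem' hf hg a ha := by rw [coeff_add, hf a ha, hg a ha, add_zero]
  smul_mem' f g hg a ha := by
    classical
    rw [smul_eq_mul, coeff_mul]
    refine Finset.sum_eq_zero fun z hz => ?_
    rw [Finset.HasAntidiagonal.mem_antidiagonal] at hz
    rw [hg z.2 (le_trans (hz ▸ le_add_self) ha), mul_zero]

theorem X_pow_mem_coeffVanishingBelow {u : σ →₀ ℕ} {i : σ} {n : ℕ} (h : u i < n) :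
    (X i ^ n : MvPolynomial σ R) ∈ coeffVanishingBelow u := by
  classical
  intro a ha
  rw [X_pow_eq_monomial, coeff_monomial, if_neg]
  rintro rfl
  simpa using (ha i).trans_lt h

theorem contract_monomial_eq_zero {u : σ →₀ ℕ} {g : MvPolynomial σ ℂ}
    (hg : g ∈ coeffVanishingBelow u) (c : ℂ) : contract g (monomial u c) = 0 := by
  classical
  refine Finset.sum_eq_zero fun a _ => Finset.sum_eq_zero fun b hb => ?_
  obtain rfl : b = u := Finset.mem_singleton.1 (support_monomial_subset hb)
  split_ifs with hau
  · rw [hg a hau, zero_mul, monomial_zero]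
  · rfl

end MvPolynomial

theorem sq_eq_sq_iff_exists_sign {R : Type*} [CommRing R] [NoZeroDivisors R] {x y : R} :
    x ^ 2 = y ^ 2 ↔ ∃ ε : R, (ε = 1 ∨ ε = -1) ∧ x = ε * y := by
  rw [sq_eq_sq_iff_eq_or_eq_neg]
  constructor
  · rintro (h | h)
    · exact ⟨1, Or.inl rfl, by rw [h, one_mul]⟩
    · exact ⟨-1, Or.inr rfl, by rw [h, neg_one_mul]⟩
  · rintro ⟨ε, rfl | rfl, rfl⟩
    · exact Or.inl (one_mul y)
    · exact Or.inr (neg_one_mul y)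

theorem contract_X_mul_X_mul_X_mul_X_eq_zero {g : MvPolynomial (Fin 4) ℂ}
    (hg : g ∈ Ideal.span {X 0 ^ 2 - X 1 ^ 2, X 2 ^ 2 - X 1 ^ 2 * X 3 ^ 2}) :
    contract g (X 0 * X 1 * X 2 * X 3) = 0 := by
  set u : Fin 4 →₀ ℕ :=
    Finsupp.single 0 1 + Finsupp.single 1 1 + Finsupp.single 2 1 + Finsupp.single 3 1
  have hF : (X 0 * X 1 * X 2 * X 3 : MvPolynomial (Fin 4) ℂ) = monomial u 1 := by
    simp [u, X, monomial_mul]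
  have hsq (i : Fin 4) (hi : i ≠ 3) : (X i ^ 2 : MvPolynomial (Fin 4) ℂ) ∈ coeffVanishingBelow u :=
    X_pow_mem_coeffVanishingBelow (by fin_cases i <;> simp_all [u])
  have hI : Ideal.span {(X 0 : MvPolynomial (Fin 4) ℂ) ^ 2 - X 1 ^ 2,
      X 2 ^ 2 - X 1 ^ 2 * X 3 ^ 2} ≤ coeffVanishingBelow u := by
    rw [Ideal.span_le, Set.insert_subset_iff, Set.singleton_subset_iff]
    exact ⟨sub_mem (hsq 0 (by decide)) (hsq 1 (by decide)),
      sub_mem (hsq 2 (by decide)) (Ideal.mul_mem_right _ _ (hsq 1 (by decide)))⟩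
  rw [hF]
  exact contract_monomial_eq_zero (hI hg) 1

theorem sq_eq_sq_and_sq_eq_sq_mul_sq_iff {p : Fin 4 → ℂ} :
    p 0 ^ 2 = p 1 ^ 2 ∧ p 2 ^ 2 = p 1 ^ 2 * p 3 ^ 2 ↔
      ∃ t s ε₁ ε₂ : ℂ, (ε₁ = 1 ∨ ε₁ = -1) ∧ (ε₂ = 1 ∨ ε₂ = -1) ∧
        p = ![t, ε₁ * t, t * s, ε₂ * s] := by
  constructor
  · rintro ⟨h1, h2⟩
    obtain ⟨ε₁, hε₁, hp1⟩ := sq_eq_sq_iff_exists_sign.1 h1.symm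
    obtain ⟨δ, hδ, hp2⟩ := sq_eq_sq_iff_exists_sign.1 (show p 2 ^ 2 = (p 0 * p 3) ^ 2 by
      rw [h2, ← h1, mul_pow])
    refine ⟨p 0, δ * p 3, ε₁, δ, hε₁, hδ, ?_⟩
    funext i
    fin_cases i
    · rfl
    · exact hp1
    · simp only [Fin.reduceFinMk, Matrix.cons_val, hp2]
      ring
    · simp [← mul_assoc, ← sq, sq_eq_one_iff.2 hδ]
  · rintro ⟨t, s, ε₁, ε₂, hε₁, hε₂, rfl⟩
    constructor
    · simp [mul_pow, sq_eq_one_iff.2 hε₁]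
    · simp [mul_pow, sq_eq_one_iff.2 hε₁, sq_eq_one_iff.2 hε₂]

/-- On the Hirzebruch surface `F₁` with Cox coordinates `(α₀, α₁, β₀, β₁)`
(variables `X 0, X 1, X 2, X 3`), the ideal `I = (α₀² − α₁², β₀² − α₁²β₁²)` is contained
in the apolar ideal of `F = x₀x₁y₀y₁`, and its zero locus in `ℂ⁴` is the union of the
torus orbits (cones) of the four points `[1,±1;1,±1]`, i.e. it defines the reduced union
of those four points of `F₁`. -/
theorem stmt9 :
    (∀ g ∈ Ideal.span {(X 0 : MvPolynomial (Fin 4) ℂ) ^ 2 - X 1 ^ 2,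
        X 2 ^ 2 - X 1 ^ 2 * X 3 ^ 2},
      contract g (X 0 * X 1 * X 2 * X 3) = 0) ∧
    {p : Fin 4 → ℂ |
        eval p ((X 0 : MvPolynomial (Fin 4) ℂ) ^ 2 - X 1 ^ 2) = 0 ∧
        eval p ((X 2 : MvPolynomial (Fin 4) ℂ) ^ 2 - X 1 ^ 2 * X 3 ^ 2) = 0} =
      {p : Fin 4 → ℂ | ∃ t s ε₁ ε₂ : ℂ, (ε₁ = 1 ∨ ε₁ = -1) ∧ (ε₂ = 1 ∨ ε₂ = -1) ∧
        p = ![t, ε₁ * t, t * s, ε₂ * s]} := by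
  refine ⟨fun g hg => contract_X_mul_X_mul_X_mul_X_eq_zero hg, ?_⟩
  ext p
  simpa only [Set.mem_ofPred_eq, map_sub, map_pow, map_mul, eval_X, sub_eq_zero]
    using sq_eq_sq_and_sq_eq_sq_mul_sq_iff
end

section
/- There is an explicit decomposition x_0 x_1 y_0 y_1 = (1/4)(φ(1,1;1,1) − φ(1,1;1,−1) − φ(1,−1;1,1) + φ(1,−1;1,−1)), where φ(λ_0,λ_1;μ_0,μ_1) = Σ λ_0^{b_0} λ_1^{b_1} μ_0^{c_0} μ_1^{c_1} · x_0^{b_0} x_1^{b_1} y_0^{c_0} y_1^{c_1}, the sum over all monomials x_0^{b_0}x_1^{b_1}y_0^{c_0}y_1^{c_1} of bidegree (3,2) with b_0+b_1+c_0 = 3 and c_0+c_1 = 2. Hence the rank of x_0 x_1 y_0 y_1 with respect to the Hirzebruch surface F_1 embedded by O(3,2) is at most 4. -/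
open MvPolynomial

/-- The parametrization `φ` of the Hirzebruch surface `F₁ ⊆ ℙ(H⁰(O(3,2))^*) = ℙ⁸`:
`φ(λ₀,λ₁;μ₀,μ₁) = Σ λ₀^{b₀}λ₁^{b₁}μ₀^{c₀}μ₁^{c₁} · x₀^{b₀}x₁^{b₁}y₀^{c₀}y₁^{c₁}`,
the sum over the nine monomials of bidegree `(3,2)` (`b₀+b₁+c₀ = 3`, `c₀+c₁ = 2`),
where `x₀,x₁,y₀,y₁` are the variables `X 0, X 1, X 2, X 3`. -/
noncomputable def phi (l0 l1 m0 m1 : ℂ) : MvPolynomial (Fin 4) ℂ :=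
  C (l0 ^ 3 * m1 ^ 2) * (X 0 ^ 3 * X 3 ^ 2) +
  C (l0 ^ 2 * l1 * m1 ^ 2) * (X 0 ^ 2 * X 1 * X 3 ^ 2) +
  C (l0 * l1 ^ 2 * m1 ^ 2) * (X 0 * X 1 ^ 2 * X 3 ^ 2) +
  C (l1 ^ 3 * m1 ^ 2) * (X 1 ^ 3 * X 3 ^ 2) +
  C (l0 ^ 2 * m0 * m1) * (X 0 ^ 2 * X 2 * X 3) +
  C (l0 * l1 * m0 * m1) * (X 0 * X 1 * X 2 * X 3) +
  C (l1 ^ 2 * m0 * m1) * (X 1 ^ 2 * X 2 * X 3) +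
  C (l0 * m0 ^ 2) * (X 0 * X 2 ^ 2) +
  C (l1 * m0 ^ 2) * (X 1 * X 2 ^ 2)

/-- Explicit decomposition
`x₀x₁y₀y₁ = (1/4)(φ(1,1;1,1) − φ(1,1;1,−1) − φ(1,−1;1,1) + φ(1,−1;1,−1))`;
in particular `x₀x₁y₀y₁` lies in the span of four points of the image of `φ`, so its
rank with respect to `F₁` embedded by `O(3,2)` is at most `4`. -/
theorem stmt10 :
    (X 0 * X 1 * X 2 * X 3 : MvPolynomial (Fin 4) ℂ) =
      (1 / 4 : ℂ) •
        (phi 1 1 1 1 - phi 1 1 1 (-1) - phi 1 (-1) 1 1 + phi 1 (-1) 1 (-1)) ∧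
    (X 0 * X 1 * X 2 * X 3 : MvPolynomial (Fin 4) ℂ) ∈
      Submodule.span ℂ
        {phi 1 1 1 1, phi 1 1 1 (-1), phi 1 (-1) 1 1, phi 1 (-1) 1 (-1)} := by
  have heq : (X 0 * X 1 * X 2 * X 3 : MvPolynomial (Fin 4) ℂ) =
      (1 / 4 : ℂ) •
        (phi 1 1 1 1 - phi 1 1 1 (-1) - phi 1 (-1) 1 1 + phi 1 (-1) 1 (-1)) := by
    simp only [phi, smul_eq_C_mul]
    ring_nf
    rw [show ((2:MvPolynomial (Fin 4) ℂ)) = C 2 from (map_ofNat C 2).symm]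
    simp only [mul_assoc, ← C_mul, ← mul_sub, ← C_sub]
    norm_num
  refine ⟨heq, ?_⟩
  rw [heq]
  have h1 : phi 1 1 1 1 ∈ ({phi 1 1 1 1, phi 1 1 1 (-1), phi 1 (-1) 1 1, phi 1 (-1) 1 (-1)} : Set (MvPolynomial (Fin 4) ℂ)) := by simp
  have h2 : phi 1 1 1 (-1) ∈ ({phi 1 1 1 1, phi 1 1 1 (-1), phi 1 (-1) 1 1, phi 1 (-1) 1 (-1)} : Set (MvPolynomial (Fin 4) ℂ)) := by simp
  have h3 : phi 1 (-1) 1 1 ∈ ({phi 1 1 1 1, phi 1 1 1 (-1), phi 1 (-1) 1 1, phi 1 (-1) 1 (-1)} : Set (MvPolynomial (Fin 4) ℂ)) := by simp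
  have h4 : phi 1 (-1) 1 (-1) ∈ ({phi 1 1 1 1, phi 1 1 1 (-1), phi 1 (-1) 1 1, phi 1 (-1) 1 (-1)} : Set (MvPolynomial (Fin 4) ℂ)) := by simp
  exact Submodule.smul_mem _ _ (Submodule.add_mem _ (Submodule.sub_mem _ (Submodule.sub_mem _ (Submodule.subset_span h1) (Submodule.subset_span h2)) (Submodule.subset_span h3)) (Submodule.subset_span h4))
end

section
/- In the ring ℂ[α, β, γ] with the grading deg α = deg β = 1, deg γ = 4, the degree-0 part of the localization at γ is the subring ℂ[α⁴/γ, α³β/γ, α²β²/γ, αβ³/γ, β⁴/γ], and the quotient of this subring by the ideal generated by the images of α³ and β³ (i.e., by α⁴/γ, α³β/γ, αβ³/γ, β⁴/γ) is a 2-dimensional ℂ-vector space with basis {1, α²β²/γ}. Hence the subscheme of ℙ(1,1,4) defined by (α³, β³) has length 2. -/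
open MvPolynomial

set_option maxHeartbeats 1000000
set_option synthInstance.maxHeartbeats 1000000

noncomputable section

/-- The Cox ring `S = ℂ[α, β, γ]` of `ℙ(1,1,4)` (`α, β, γ = X 0, X 1, X 2`,
degrees `1, 1, 4`). -/
abbrev S114 : Type := MvPolynomial (Fin 3) ℂ

/-- The localization `S_γ` of the Cox ring at `γ`. -/
abbrev A114 : Type := Localization.Away (X 2 : S114)

/-- `1/γ` in the localization. -/
def γinv : A114 := IsLocalization.Away.invSelf (X 2 : S114)

/-- `f/γ` in the localization. -/
def el (f : S114) : A114 := algebraMap S114 A114 f * γinv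

/-- The subalgebra `ℂ[α⁴/γ, α³β/γ, α²β²/γ, αβ³/γ, β⁴/γ]` of `S_γ`. -/
def A0 : Subalgebra ℂ A114 :=
  Algebra.adjoin ℂ {el (X 0 ^ 4), el (X 0 ^ 3 * X 1), el (X 0 ^ 2 * X 1 ^ 2),
    el (X 0 * X 1 ^ 3), el (X 1 ^ 4)}

instance : HasQuotient ↥A0 (Ideal ↥A0) := Ideal.instHasQuotient

/-- The ideal of `A0` generated by the images of `α³` and `β³`, namely by
`α⁴/γ, α³β/γ, αβ³/γ, β⁴/γ`. -/
def J16 : Ideal A0 :=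
  Ideal.span {⟨el (X 0 ^ 4), Algebra.subset_adjoin (by simp)⟩,
    ⟨el (X 0 ^ 3 * X 1), Algebra.subset_adjoin (by simp)⟩,
    ⟨el (X 0 * X 1 ^ 3), Algebra.subset_adjoin (by simp)⟩,
    ⟨el (X 1 ^ 4), Algebra.subset_adjoin (by simp)⟩}

instance instCR : CommRing (↥A0) := inferInstance
instance instCRQ : CommRing (↥A0 ⧸ J16) := Ideal.Quotient.commRing J16
instance instAlgQ : Algebra ℂ (↥A0 ⧸ J16) := Ideal.Quotient.algebra ℂ

/-! An element of degree 0 in `S_γ` is `f / γⁿ` with `f` of weighted degree `4n`; each monomial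
`αᵃβᵇγᶜ` of `f` has `a + b = 4(n - c)`, so `αᵃβᵇ / γⁿ⁻ᶜ` is a product of `n - c` monomials
`αⁱβʲ / γ` with `i + j = 4`, i.e. of generators of `A0`.

Modulo `J16` every generator except `u = α²β²/γ` vanishes, and `u² = (α⁴/γ)(β⁴/γ) ∈ J16`, so
`1, u` span the quotient. They are independent because setting `γ = 1` maps `A0 / J16` to
`ℂ[x, y] / (x³, y³)`, where `1` and `x²y²` are monomials outside a monomial ideal. -/

namespace IsLocalization.Away

variable {R S : Type*} [CommSemiring R] [CommSemiring S] [Algebra R S] {g : R}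
  [IsLocalization.Away g S]

theorem eq_mul_invSelf_pow_of_mul_eq {x : S} {n : ℕ} {f : R}
    (h : x * algebraMap R S (g ^ n) = algebraMap R S f) :
    x = algebraMap R S f * invSelf g ^ n := by
  rw [← h, map_pow, mul_assoc, ← mul_pow, mul_invSelf, one_pow, mul_one]

theorem algebraMap_pow_mul_invSelf_pow {c n : ℕ} (h : c ≤ n) :
    algebraMap R S (g ^ c) * invSelf g ^ n = invSelf g ^ (n - c) := by
  rw [← Nat.add_sub_cancel' h, pow_add, ← mul_assoc, map_pow, ← mul_pow, mul_invSelf, one_pow,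
    one_mul, Nat.add_sub_cancel_left]

end IsLocalization.Away

namespace MvPolynomial

variable {σ R M : Type*}

section DegreeZero

variable [CommSemiring R] [AddCommMonoid M] {w : σ → M} {g : MvPolynomial σ R} {d : M}

def awayDegreeZero (hg : IsWeightedHomogeneous w g d) :
    Subalgebra R (Localization.Away g) where
  carrier := {x | ∃ (n : ℕ) (f : MvPolynomial σ R),
    f ∈ weightedHomogeneousSubmodule R w (n • d) ∧ x * algebraMap _ _ (g ^ n) = algebraMap _ _ f}
  mul_mem' := by
    rintro x y ⟨n, f, hf, hx⟩ ⟨m, f', hf', hy⟩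
    refine ⟨n + m, f * f', ?_, ?_⟩
    · rw [add_smul]
      exact IsWeightedHomogeneous.mul hf hf'
    · rw [pow_add, map_mul, map_mul, ← hx, ← hy]
      ring
  add_mem' := by
    rintro x y ⟨n, f, hf, hx⟩ ⟨m, f', hf', hy⟩
    refine ⟨n + m, f * g ^ m + f' * g ^ n, ?_, ?_⟩
    · rw [mem_weightedHomogeneousSubmodule, add_smul]
      refine IsWeightedHomogeneous.add (IsWeightedHomogeneous.mul hf (hg.pow m)) ?_
      rw [add_comm]
      exact IsWeightedHomogeneous.mul hf' (hg.pow n)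
    · rw [pow_add, map_add, map_mul, map_mul, map_mul, ← hx, ← hy]
      ring
  algebraMap_mem' c := ⟨0, C c, by simpa using isWeightedHomogeneous_C w c,
    by rw [pow_zero, map_one, mul_one, ← algebraMap_eq, ← IsScalarTower.algebraMap_apply]⟩

theorem mem_awayDegreeZero (hg : IsWeightedHomogeneous w g d) {x : Localization.Away g} :
    x ∈ awayDegreeZero hg ↔ ∃ (n : ℕ) (f : MvPolynomial σ R),
      f ∈ weightedHomogeneousSubmodule R w (n • d) ∧
        x * algebraMap _ _ (g ^ n) = algebraMap _ _ f :=
  Iff.rfl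

theorem algebraMap_mul_invSelf_pow_mem_awayDegreeZero (hg : IsWeightedHomogeneous w g d) {n : ℕ}
    {f : MvPolynomial σ R} (hf : IsWeightedHomogeneous w f (n • d)) :
    algebraMap _ (Localization.Away g) f * IsLocalization.Away.invSelf g ^ n ∈
      awayDegreeZero hg :=
  ⟨n, f, hf, by
    rw [map_pow, mul_assoc, ← mul_pow, mul_comm (IsLocalization.Away.invSelf g),
      IsLocalization.Away.mul_invSelf, one_pow, mul_one]⟩

end DegreeZero

section MonomialIdeal

variable [CommRing R]

theorem linearIndependent_mk_monomial_of_not_le (s : Set (σ →₀ ℕ)) :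
    LinearIndependent R (fun m : {m : σ →₀ ℕ // ∀ si ∈ s, ¬ si ≤ m} =>
      Ideal.Quotient.mk (Ideal.span ((fun si => monomial si (1 : R)) '' s)) (monomial m.1 1)) := by
  classical
  rw [linearIndependent_iff']
  intro t c hc m hm
  set p : MvPolynomial σ R := ∑ i ∈ t, monomial i.1 (c i)
  have hp : p ∈ Ideal.span ((fun si => monomial si (1 : R)) '' s) := by
    rw [← Ideal.Quotient.eq_zero_iff_mem, ← hc, map_sum]
    refine Finset.sum_congr rfl fun i _ => ?_
    rw [← Ideal.Quotient.mkₐ_eq_mk R, ← map_smul, smul_monomial, smul_eq_mul, mul_one]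
  have hcoeff : coeff m.1 p = c m := by
    simp only [p, coeff_sum, coeff_monomial, Subtype.val_inj, Finset.sum_ite_eq', if_pos hm]
  by_contra hcm
  obtain ⟨si, hsi, hle⟩ := mem_ideal_span_monomial_image.mp hp m.1
    (by rw [mem_support_iff, hcoeff]; exact hcm)
  exact m.2 si hsi hle

end MonomialIdeal

end MvPolynomial

namespace Algebra

variable {R A : Type*} [CommSemiring R] [Semiring A] [Algebra R A]

theorem adjoin_singleton_le_span_of_mul_self_eq_zero {e : A} (he : e * e = 0) :
    Subalgebra.toSubmodule (adjoin R {e}) ≤ Submodule.span R {1, e} := by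
  rw [adjoin_eq_span, Submodule.span_le]
  intro x hx
  obtain ⟨n, rfl⟩ := Submonoid.mem_closure_singleton.mp hx
  match n with
  | 0 => exact Submodule.subset_span (by simp)
  | 1 => exact Submodule.subset_span (by simp)
  | n + 2 => simp [pow_add, pow_two, he]

theorem subalgebra_eq_top_of_le_adjoin {S : Subalgebra R A} {s : Set A} (hs : s ⊆ S)
    (hS : S ≤ adjoin R s) (T : Subalgebra R S) (h : ∀ x (hx : x ∈ s), ⟨x, hs hx⟩ ∈ T) : T = ⊤ := by
  have hle : S ≤ T.map S.val := hS.trans (adjoin_le fun x hx => ⟨_, h x hx, rfl⟩)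
  refine Algebra.eq_top_iff.mpr fun x => ?_
  obtain ⟨y, hy, hyx⟩ := hle x.2
  rwa [← Subtype.ext hyx]

end Algebra

open IsLocalization.Away

theorem weight_114_apply (d : Fin 3 →₀ ℕ) :
    Finsupp.weight (![1, 1, 4] : Fin 3 → ℤ) d = d 0 + d 1 + 4 * d 2 := by
  simp [Finsupp.weight_apply, Finsupp.sum_fintype, Fin.sum_univ_three]
  ring

theorem isWeightedHomogeneous_X0_pow_mul_X1_pow (a b : ℕ) :
    IsWeightedHomogeneous (![1, 1, 4] : Fin 3 → ℤ) (X 0 ^ a * X 1 ^ b : S114) (a + b) := by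
  simpa using ((isWeightedHomogeneous_X ℂ (![1, 1, 4] : Fin 3 → ℤ) 0).pow a).mul
    ((isWeightedHomogeneous_X ℂ (![1, 1, 4] : Fin 3 → ℤ) 1).pow b)

theorem A0_eq_adjoin :
    A0 = Algebra.adjoin ℂ
      ((fun p : ℕ × ℕ => el (X 0 ^ p.1 * X 1 ^ p.2)) '' {p | p.1 + p.2 = 4}) := by
  refine congrArg (Algebra.adjoin ℂ) (Set.ext fun x => ⟨?_, ?_⟩)
  · rintro (rfl | rfl | rfl | rfl | rfl)
    exacts [⟨(4, 0), rfl, by simp⟩, ⟨(3, 1), rfl, by simp⟩, ⟨(2, 2), rfl, rfl⟩,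
      ⟨(1, 3), rfl, by simp⟩, ⟨(0, 4), rfl, by simp⟩]
  · rintro ⟨⟨a, b⟩, h, rfl⟩
    obtain ⟨rfl, rfl⟩ | ⟨rfl, rfl⟩ | ⟨rfl, rfl⟩ | ⟨rfl, rfl⟩ | ⟨rfl, rfl⟩ :
        (a = 4 ∧ b = 0) ∨ (a = 3 ∧ b = 1) ∨ (a = 2 ∧ b = 2) ∨ (a = 1 ∧ b = 3) ∨
          (a = 0 ∧ b = 4) := by
      change a + b = 4 at h; omega
    all_goals simp

theorem el_X0_pow_mul_X1_pow_mem_A0 {a b : ℕ} (h : a + b = 4) : el (X 0 ^ a * X 1 ^ b) ∈ A0 := by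
  rw [A0_eq_adjoin]
  exact Algebra.subset_adjoin ⟨(a, b), h, rfl⟩

theorem algebraMap_X0_pow_mul_X1_pow_mul_γinv_pow_mem_A0 (k : ℕ) :
    ∀ a b : ℕ, a + b = 4 * k → algebraMap S114 A114 (X 0 ^ a * X 1 ^ b) * γinv ^ k ∈ A0 := by
  induction k with
  | zero =>
    intro a b h
    obtain ⟨rfl, rfl⟩ : a = 0 ∧ b = 0 := by omega
    simp
  | succ k ih =>
    intro a b h
    obtain ⟨a₁, a₂, b₁, b₂, rfl, rfl, h₁, h₂⟩ :
        ∃ a₁ a₂ b₁ b₂ : ℕ, a = a₁ + a₂ ∧ b = b₁ + b₂ ∧ a₁ + b₁ = 4 ∧ a₂ + b₂ = 4 * k :=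
      ⟨min a 4, a - min a 4, 4 - min a 4, b - (4 - min a 4), by omega, by omega, by omega,
        by omega⟩
    have hsplit : algebraMap S114 A114 (X 0 ^ (a₁ + a₂) * X 1 ^ (b₁ + b₂)) * γinv ^ (k + 1) =
        el (X 0 ^ a₁ * X 1 ^ b₁) * (algebraMap S114 A114 (X 0 ^ a₂ * X 1 ^ b₂) * γinv ^ k) := by
      simp only [el, pow_add, pow_succ, map_mul]
      ring
    rw [hsplit]
    exact mul_mem (el_X0_pow_mul_X1_pow_mem_A0 h₁) (ih a₂ b₂ h₂)

theorem algebraMap_mul_γinv_pow_mem_A0 {n : ℕ} {f : S114}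
    (hf : IsWeightedHomogeneous (![1, 1, 4] : Fin 3 → ℤ) f (4 * n)) :
    algebraMap S114 A114 f * γinv ^ n ∈ A0 := by
  induction hf using IsWeightedHomogeneous.induction_on with
  | zero => simp
  | add p q _ _ hp hq => simpa [add_mul] using add_mem hp hq
  | monomial d r hd =>
    rw [weight_114_apply] at hd
    have hd₂ : d 2 ≤ n := by omega
    have hmon : algebraMap S114 A114 (monomial d r) * γinv ^ n = r •
        (algebraMap S114 A114 (X 0 ^ d 0 * X 1 ^ d 1) * γinv ^ (n - d 2)) := by
      rw [γinv, ← algebraMap_pow_mul_invSelf_pow hd₂, monomial_eq,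
        Finsupp.prod_fintype _ _ (by simp), Fin.prod_univ_three, Algebra.smul_def,
        IsScalarTower.algebraMap_apply ℂ S114 A114, algebraMap_eq]
      simp only [map_mul]
      ring
    rw [hmon]
    exact A0.smul_mem (algebraMap_X0_pow_mul_X1_pow_mul_γinv_pow_mem_A0 _ _ _ (by omega)) r

theorem isWeightedHomogeneous_X2 : IsWeightedHomogeneous (![1, 1, 4] : Fin 3 → ℤ) (X 2 : S114) 4 :=
  isWeightedHomogeneous_X ℂ _ 2

theorem A0_eq_awayDegreeZero : A0 = awayDegreeZero isWeightedHomogeneous_X2 := by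
  refine le_antisymm ?_ fun x ⟨n, f, hf, hx⟩ => ?_
  · rw [A0_eq_adjoin, Algebra.adjoin_le_iff]
    rintro _ ⟨⟨a, b⟩, h, rfl⟩
    have hf := isWeightedHomogeneous_X0_pow_mul_X1_pow a b
    rw [show ((a : ℤ) + b) = 1 • 4 by change a + b = 4 at h; simp; exact_mod_cast h] at hf
    simpa [el, γinv] using algebraMap_mul_invSelf_pow_mem_awayDegreeZero isWeightedHomogeneous_X2 hf
  · rw [eq_mul_invSelf_pow_of_mul_eq hx]
    exact algebraMap_mul_γinv_pow_mem_A0 (by simpa [mul_comm] using hf)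

theorem el_mem_J16 {f : S114}
    (hf : f ∈ ({X 0 ^ 4, X 0 ^ 3 * X 1, X 0 * X 1 ^ 3, X 1 ^ 4} : Set S114)) (h : el f ∈ A0) :
    (⟨el f, h⟩ : A0) ∈ J16 := by
  apply Ideal.subset_span
  rcases hf with rfl | rfl | rfl | rfl
  exacts [Or.inl rfl, Or.inr (Or.inl rfl), Or.inr (Or.inr (Or.inl rfl)),
    Or.inr (Or.inr (Or.inr rfl))]

def α2β2Overγ : A0 := ⟨el (X 0 ^ 2 * X 1 ^ 2), Algebra.subset_adjoin (by simp)⟩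

theorem mul_self_α2β2Overγ_mem_J16 : α2β2Overγ * α2β2Overγ ∈ J16 := by
  have h : α2β2Overγ * α2β2Overγ =
      ⟨el (X 0 ^ 4), Algebra.subset_adjoin (by simp)⟩ *
        ⟨el (X 1 ^ 4), Algebra.subset_adjoin (by simp)⟩ := by
    ext
    simp only [α2β2Overγ, el, MulMemClass.mk_mul_mk, map_mul, map_pow]
    ring
  rw [h]
  exact Ideal.mul_mem_right _ _ (el_mem_J16 (by simp) _)

theorem mkₐ_mem_adjoin_mk_α2β2Overγ (x : A0) :
    Ideal.Quotient.mkₐ ℂ J16 x ∈ Algebra.adjoin ℂ {Ideal.Quotient.mk J16 α2β2Overγ} := by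
  suffices h : (Algebra.adjoin ℂ {Ideal.Quotient.mk J16 α2β2Overγ}).comap
      (Ideal.Quotient.mkₐ ℂ J16) = ⊤ from h.ge Algebra.mem_top
  refine Algebra.subalgebra_eq_top_of_le_adjoin Algebra.subset_adjoin le_rfl _ ?_
  have hJ : ∀ y ∈ J16, Ideal.Quotient.mkₐ ℂ J16 y ∈
      Algebra.adjoin ℂ {Ideal.Quotient.mk J16 α2β2Overγ} := fun y hy => by
    rw [Ideal.Quotient.mkₐ_eq_mk, Ideal.Quotient.eq_zero_iff_mem.mpr hy]
    exact zero_mem _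
  rintro _ (rfl | rfl | rfl | rfl | rfl)
  · exact hJ _ (el_mem_J16 (by simp) _)
  · exact hJ _ (el_mem_J16 (by simp) _)
  · exact Algebra.subset_adjoin rfl
  · exact hJ _ (el_mem_J16 (by simp) _)
  · exact hJ _ (el_mem_J16 (by simp) _)

theorem span_mk_one_mk_α2β2Overγ :
    Submodule.span ℂ {Ideal.Quotient.mk J16 1, Ideal.Quotient.mk J16 α2β2Overγ} = ⊤ := by
  refine eq_top_iff.mpr fun y _ => ?_
  obtain ⟨x, rfl⟩ := Ideal.Quotient.mk_surjective y
  rw [map_one]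
  exact Algebra.adjoin_singleton_le_span_of_mul_self_eq_zero (by
      rw [← map_mul, Ideal.Quotient.eq_zero_iff_mem]; exact mul_self_α2β2Overγ_mem_J16)
    (mkₐ_mem_adjoin_mk_α2β2Overγ x)

def dehomogenize : A114 →ₐ[ℂ] MvPolynomial (Fin 2) ℂ :=
  IsLocalization.liftAlgHom (M := Submonoid.powers (X 2 : S114))
    (f := aeval ![X 0, X 1, 1]) (by rintro ⟨_, n, rfl⟩; simp)

theorem dehomogenize_algebraMap (f : S114) :
    dehomogenize (algebraMap S114 A114 f) = aeval ![X 0, X 1, 1] f :=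
  IsLocalization.lift_eq _ _

theorem dehomogenize_el (f : S114) : dehomogenize (el f) = aeval ![X 0, X 1, 1] f := by
  have hinv : dehomogenize γinv = 1 := by
    have h := congrArg dehomogenize (mul_invSelf (X 2 : S114) (S := A114))
    rwa [map_mul, map_one, dehomogenize_algebraMap, aeval_X, Matrix.cons_val_two,
      Matrix.tail_cons, Matrix.head_cons, one_mul] at h
  rw [el, map_mul, dehomogenize_algebraMap, hinv, mul_one]

def cubesIdeal : Ideal (MvPolynomial (Fin 2) ℂ) := Ideal.span {X 0 ^ 3, X 1 ^ 3}

theorem J16_le_comap_cubesIdeal : J16 ≤ cubesIdeal.comap (dehomogenize.comp A0.val) := by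
  rw [J16, Ideal.span_le]
  rintro _ (rfl | rfl | rfl | rfl) <;>
    simp only [SetLike.mem_coe, Ideal.mem_comap, AlgHom.comp_apply, Subalgebra.coe_val,
      dehomogenize_el, map_mul, map_pow, aeval_X]
  · exact pow_succ' (X 0 : MvPolynomial (Fin 2) ℂ) 3 ▸
      Ideal.mul_mem_left _ _ (Ideal.subset_span (by simp))
  · exact Ideal.mul_mem_right _ _ (Ideal.subset_span (by simp))
  · exact Ideal.mul_mem_left _ _ (Ideal.subset_span (by simp))
  · exact pow_succ' (X 1 : MvPolynomial (Fin 2) ℂ) 3 ▸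
      Ideal.mul_mem_left _ _ (Ideal.subset_span (by simp))

def toDehomogenizedQuotient : A0 ⧸ J16 →ₐ[ℂ] MvPolynomial (Fin 2) ℂ ⧸ cubesIdeal :=
  Ideal.quotientMapₐ _ (dehomogenize.comp A0.val) J16_le_comap_cubesIdeal

theorem linearIndependent_one_X0_sq_mul_X1_sq :
    LinearIndependent ℂ ![Ideal.Quotient.mk cubesIdeal 1,
      Ideal.Quotient.mk cubesIdeal (X 0 ^ 2 * X 1 ^ 2)] := by
  have hcubes : cubesIdeal = Ideal.span ((fun si => monomial si (1 : ℂ)) ''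
      {Finsupp.single 0 3, Finsupp.single 1 3}) := by
    simp [cubesIdeal, Set.image_pair, X_pow_eq_monomial]
  have hfree : ∀ m : Fin 2 →₀ ℕ, m 0 < 3 → m 1 < 3 →
      ∀ si ∈ ({Finsupp.single 0 3, Finsupp.single 1 3} : Set (Fin 2 →₀ ℕ)), ¬ si ≤ m := by
    rintro m h0 h1 _ (rfl | rfl) hle
    · simpa using (hle 0).trans_lt h0
    · simpa using (hle 1).trans_lt h1
  have key := (linearIndependent_mk_monomial_of_not_le (R := ℂ) _).comp
    ![⟨0, hfree 0 (by simp) (by simp)⟩,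
      ⟨Finsupp.single 0 2 + Finsupp.single 1 2, hfree _ (by simp) (by simp)⟩]
    (by
      intro i j
      fin_cases i <;> fin_cases j <;> simp [Subtype.ext_iff, Finsupp.ext_iff, Fin.forall_fin_two])
  rw [← hcubes] at key
  refine (congrArg (fun v : Fin 2 → _ => LinearIndependent ℂ v) ?_).mpr key
  ext i
  fin_cases i
  · simp
  · simp [X_pow_eq_monomial, monomial_mul]

theorem linearIndependent_mk_one_mk_α2β2Overγ :
    LinearIndependent ℂ ![Ideal.Quotient.mk J16 1, Ideal.Quotient.mk J16 α2β2Overγ] := by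
  refine LinearIndependent.of_comp toDehomogenizedQuotient.toLinearMap ?_
  refine (congrArg (fun v : Fin 2 → _ => LinearIndependent ℂ v) ?_).mpr
    linearIndependent_one_X0_sq_mul_X1_sq
  ext i
  fin_cases i <;> simp [toDehomogenizedQuotient, α2β2Overγ, dehomogenize_el]

theorem coe_A0 : (A0 : Set A114) = {x : A114 | ∃ (n : ℕ) (f : S114),
    f ∈ weightedHomogeneousSubmodule ℂ (![1, 1, 4] : Fin 3 → ℤ) (4 * n) ∧
    x * algebraMap S114 A114 (X 2 ^ n) = algebraMap S114 A114 f} := by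
  ext x
  rw [SetLike.mem_coe, A0_eq_awayDegreeZero, mem_awayDegreeZero]
  simp only [nsmul_eq_mul, mul_comm _ (4 : ℤ)]
  rfl

/-- The degree-0 part of the localization of the Cox ring of `ℙ(1,1,4)` at `γ` is
`ℂ[α⁴/γ, α³β/γ, α²β²/γ, αβ³/γ, β⁴/γ]` (an element has degree 0 iff after multiplying by
`γⁿ` it becomes a polynomial of weighted degree `4n`), and the quotient of this subring
by the ideal generated by the images of `α³` and `β³` is a 2-dimensional `ℂ`-vector
space with basis `{1, α²β²/γ}`; hence the subscheme of `ℙ(1,1,4)` defined by `(α³, β³)`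
has length 2. -/
theorem stmt16 :
    ((A0 : Set A114) = {x : A114 | ∃ (n : ℕ) (f : S114),
        f ∈ weightedHomogeneousSubmodule ℂ (![1, 1, 4] : Fin 3 → ℤ) (4 * n) ∧
        x * algebraMap S114 A114 (X 2 ^ n) = algebraMap S114 A114 f}) ∧
    Module.finrank ℂ (↥A0 ⧸ J16) = 2 ∧
    ∃ b : Module.Basis (Fin 2) ℂ (↥A0 ⧸ J16),
      b 0 = Ideal.Quotient.mk J16 1 ∧
      b 1 = Ideal.Quotient.mk J16
        ⟨el (X 0 ^ 2 * X 1 ^ 2), Algebra.subset_adjoin (by simp)⟩ := by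
  let b : Module.Basis (Fin 2) ℂ (↥A0 ⧸ J16) := .mk linearIndependent_mk_one_mk_α2β2Overγ
    (by rw [Matrix.range_cons_cons_empty, span_mk_one_mk_α2β2Overγ])
  refine ⟨coe_A0, ?_, b, ?_, ?_⟩
  · rw [Module.finrank_eq_card_basis b, Fintype.card_fin]
  · simp [b]
  · simp [b, α2β2Overγ]

end
end
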